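/- In every involutive Stone algebra, ∇(x ∨ y) = ∇x ∨ ∇y for all x, y. -/

import Mathlib

/-- An involutive Stone algebra: a De Morgan algebra (bounded distributive
lattice with an involution `snot` satisfying the De Morgan laws) equipped
with a unary operation `nabla` satisfying (IS1)-(IS4). -/
class InvolutiveStone (α : Type*) extends DistribLattice α, BoundedOrder α where
  snot : α → α
  nabla : α → α
  snot_sup : ∀ x y : α, snot (x ⊔ y) = snot x ⊓ snot y
  snot_snot : ∀ x : α, snot (snot x) = x
  snot_top : snot (⊤ : α) = ⊥
  nabla_bot : nabla (⊥ : α) = ⊥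
  inf_nabla : ∀ x : α, x = x ⊓ nabla x
  nabla_inf : ∀ x y : α, nabla (x ⊓ y) = nabla x ⊓ nabla y
  snot_nabla_inf : ∀ x : α, snot (nabla x) ⊓ nabla x = ⊥

open InvolutiveStone

/-! Every `∇x` is complemented, with complement `∼∇x`. Hence `∇x ⊔ ∇y` has the complement
`c = ∼∇x ⊓ ∼∇y`, which is disjoint from `x ⊔ y`. Since `∇` preserves meets and `⊥`, it preserves
disjointness, so `∇(x ⊔ y)` is disjoint from `∇c ≥ c`, and therefore lies below `∇x ⊔ ∇y`. -/

namespace InvolutiveStone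

variable {α : Type*} [InvolutiveStone α]

theorem snot_injective : Function.Injective (snot : α → α) :=
  Function.LeftInverse.injective snot_snot

theorem le_nabla (x : α) : x ≤ nabla x :=
  left_eq_inf.mp (inf_nabla x)

theorem nabla_mono : Monotone (nabla : α → α) := fun x y h => by
  rw [← inf_eq_left.mpr h, nabla_inf]
  exact inf_le_right

theorem Disjoint.nabla {x y : α} (h : Disjoint x y) : Disjoint (nabla x) (nabla y) := by
  rw [disjoint_iff, ← nabla_inf, h.eq_bot, nabla_bot]

theorem isCompl_nabla_snot_nabla (x : α) : IsCompl (nabla x) (snot (nabla x)) where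
  disjoint := disjoint_iff.mpr (by rw [inf_comm, snot_nabla_inf])
  codisjoint := codisjoint_iff.mpr <| snot_injective <| by
    rw [snot_sup, snot_snot, snot_nabla_inf, snot_top]

end InvolutiveStone

/-- `∇` distributes over joins. -/
theorem nabla_sup {α : Type*} [InvolutiveStone α] (x y : α) :
    nabla (x ⊔ y) = nabla x ⊔ nabla y := by
  have hc := (isCompl_nabla_snot_nabla x).sup_inf (isCompl_nabla_snot_nabla y)
  have h_disj : Disjoint (nabla (x ⊔ y)) (snot (nabla x) ⊓ snot (nabla y)) :=
    (hc.disjoint.mono_left (sup_le_sup (le_nabla x) (le_nabla y))).nabla.mono_right (le_nabla _)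
  exact le_antisymm (h_disj.le_of_codisjoint hc.codisjoint.symm)
    (sup_le (nabla_mono le_sup_left) (nabla_mono le_sup_right))
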